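/- arXiv:2007.07299 — 3 statements merged into one kernel-verified Lean document; each statement's English description precedes it below -/
import Mathlib

section
/- Let $T_1, T_2 \in \mathbb{C}^{m\times m}$ be orthogonal projections, $T_j^\perp = I - T_j$. Define $W^0(\rho) = (T_2 T_1 + T_2^\perp T_1^\perp)\sin \rho\pi + (T_2^\perp T_1 - T_2 T_1^\perp)\cos \rho\pi$. Then $\det W^0(\rho)$ is not identically zero as a function of $\rho \in \mathbb{C}$; in fact $\det W^0$ is an entire function of $\rho$ that is periodic with period $2$. -/
/-! Writing `sin` and `cos` through exponentials,
`W⁰(ρ) = (e^{-iρπ}/2) (e^{2iρπ} (B - iA) + (B + iA))` with `A = T₂T₁ + T₂^⊥T₁^⊥` and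
`B = T₂^⊥T₁ - T₂T₁^⊥`. The matrix `B + iA = (iT₂ + T₂^⊥)(T₁ + iT₁^⊥)` is invertible, since
each factor acts by nonzero scalars on the two complementary ranges of an idempotent. Hence
`det (u (B - iA) + (B + iA)) ≠ 0` for some small `u ≠ 0` by continuity, and every `u ≠ 0` is
of the form `e^{2iρπ}`. -/

open scoped Real

/-- The characteristic matrix function of the unperturbed problem. -/
noncomputable def W0 {m : ℕ} (T1 T2 : Matrix (Fin m) (Fin m) ℂ) (ρ : ℂ) :
    Matrix (Fin m) (Fin m) ℂ :=
  Complex.sin (ρ * π) • (T2 * T1 + (1 - T2) * (1 - T1))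
    + Complex.cos (ρ * π) • ((1 - T2) * T1 - T2 * (1 - T1))

open Complex Matrix Topology

namespace IsIdempotentElem

variable {R A : Type*} [CommRing R] [Ring A] [Algebra R A] {p : A}

theorem smul_add_smul_one_sub_mul (hp : IsIdempotentElem p) (a b c d : R) :
    (a • p + b • (1 - p)) * (c • p + d • (1 - p)) =
      (a * c) • p + (b * d) • (1 - p) := by
  simp only [add_mul, mul_add, smul_mul_smul_comm, hp.eq, hp.one_sub.eq, hp.mul_one_sub_self,
    hp.one_sub_mul_self, smul_zero, add_zero, zero_add]

theorem isUnit_smul_add_smul_one_sub (hp : IsIdempotentElem p) {a b : R} (ha : IsUnit a)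
    (hb : IsUnit b) : IsUnit (a • p + b • (1 - p)) := by
  refine ⟨⟨_, ha.unit⁻¹.val • p + hb.unit⁻¹.val • (1 - p), ?_, ?_⟩, rfl⟩ <;>
    simp [hp.smul_add_smul_one_sub_mul]

end IsIdempotentElem

theorem Differentiable.matrix_det {𝕜 E n : Type*} [NontriviallyNormedField 𝕜]
    [NormedAddCommGroup E] [NormedSpace 𝕜 E] [Fintype n] [DecidableEq n]
    {f : E → Matrix n n 𝕜} (hf : ∀ i j, Differentiable 𝕜 fun x => f x i j) :
    Differentiable 𝕜 fun x => (f x).det := by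
  simp only [det_apply']
  fun_prop

theorem Matrix.exists_ne_zero_det_smul_add_ne_zero {𝕜 n : Type*} [NontriviallyNormedField 𝕜]
    [Fintype n] [DecidableEq n] (X : Matrix n n 𝕜) {Y : Matrix n n 𝕜} (hY : Y.det ≠ 0) :
    ∃ u : 𝕜, u ≠ 0 ∧ (u • X + Y).det ≠ 0 := by
  have hcont : Continuous fun u : 𝕜 => (u • X + Y).det := by fun_prop
  have hnear : ∀ᶠ u in 𝓝[≠] (0 : 𝕜), (u • X + Y).det ≠ 0 :=
    nhdsWithin_le_nhds (hcont.continuousAt.eventually_ne (by simpa using hY))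
  obtain ⟨u, hu, hu0⟩ := (hnear.and self_mem_nhdsWithin).exists
  exact ⟨u, hu0, hu⟩

theorem Complex.sin_smul_add_cos_smul {M : Type*} [AddCommGroup M] [Module ℂ M] (z : ℂ)
    (a b : M) :
    sin z • a + cos z • b =
      (exp (-(z * I)) / 2) • (exp (2 * z * I) • (b - I • a) + (b + I • a)) := by
  have hsq : exp (2 * z * I) = exp (z * I) * exp (z * I) := by rw [← exp_add]; ring_nf
  have hinv : exp (-(z * I)) * exp (z * I) = 1 := by rw [← exp_add]; simp
  rw [sin, cos, hsq, neg_mul]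
  linear_combination (norm := module)
    (I * exp (z * I) / 2 * hinv) • a - (exp (z * I) / 2 * hinv) • b

theorem W0_add_two {m : ℕ} (T1 T2 : Matrix (Fin m) (Fin m) ℂ) (ρ : ℂ) :
    W0 T1 T2 (ρ + 2) = W0 T1 T2 ρ := by
  simp only [W0, add_mul, sin_add_two_pi, cos_add_two_pi]

theorem differentiable_det_W0 {m : ℕ} (T1 T2 : Matrix (Fin m) (Fin m) ℂ) :
    Differentiable ℂ fun ρ => (W0 T1 T2 ρ).det :=
  Differentiable.matrix_det fun i j => by
    simp only [W0, Matrix.add_apply, Matrix.smul_apply, smul_eq_mul]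
    fun_prop

theorem det_W0_exp_neg_coeff_ne_zero {m : ℕ} {T1 T2 : Matrix (Fin m) (Fin m) ℂ}
    (hp1 : IsIdempotentElem T1) (hp2 : IsIdempotentElem T2) :
    ((1 - T2) * T1 - T2 * (1 - T1) + I • (T2 * T1 + (1 - T2) * (1 - T1))).det ≠ 0 := by
  have hfactor : (1 - T2) * T1 - T2 * (1 - T1) + I • (T2 * T1 + (1 - T2) * (1 - T1)) =
      (I • T2 + (1 : ℂ) • (1 - T2)) * ((1 : ℂ) • T1 + I • (1 - T1)) := by
    simp only [one_smul, add_mul, mul_add, smul_mul_assoc, mul_smul_comm, smul_add, smul_smul,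
      I_mul_I, neg_one_smul]
    abel
  have hI : IsUnit I := isUnit_iff_ne_zero.mpr I_ne_zero
  rw [hfactor, det_mul]
  exact mul_ne_zero
    ((isUnit_iff_isUnit_det _).mp (hp2.isUnit_smul_add_smul_one_sub hI isUnit_one)).ne_zero
    ((isUnit_iff_isUnit_det _).mp (hp1.isUnit_smul_add_smul_one_sub isUnit_one hI)).ne_zero

theorem det_W0_entire_periodic_not_zero_general {m : ℕ} (T1 T2 : Matrix (Fin m) (Fin m) ℂ)
    (hp1 : T1 * T1 = T1)
    (hp2 : T2 * T2 = T2) :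
    Differentiable ℂ (fun ρ : ℂ => (W0 T1 T2 ρ).det) ∧
      (∀ ρ : ℂ, (W0 T1 T2 (ρ + 2)).det = (W0 T1 T2 ρ).det) ∧
      (∃ ρ : ℂ, (W0 T1 T2 ρ).det ≠ 0) := by
  refine ⟨differentiable_det_W0 T1 T2, fun ρ => by rw [W0_add_two], ?_⟩
  obtain ⟨u, hu0, hu⟩ := exists_ne_zero_det_smul_add_ne_zero
    ((1 - T2) * T1 - T2 * (1 - T1) - I • (T2 * T1 + (1 - T2) * (1 - T1)))
    (det_W0_exp_neg_coeff_ne_zero hp1 hp2)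
  obtain ⟨z, rfl⟩ : u ∈ Set.range exp := by rwa [range_exp]
  refine ⟨z / (2 * π * I), ?_⟩
  have hρ : 2 * (z / (2 * π * I) * π) * I = z := by field_simp
  rw [W0, sin_smul_add_cos_smul, det_smul, hρ]
  exact mul_ne_zero (pow_ne_zero _ (by simp [exp_ne_zero])) hu

/-- `det W⁰` is an entire function of `ρ`, periodic with period `2`, and not identically zero. -/
theorem det_W0_entire_periodic_not_zero {m : ℕ} (T1 T2 : Matrix (Fin m) (Fin m) ℂ)
    (hp1 : T1 * T1 = T1) (hh1 : T1.conjTranspose = T1)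
    (hp2 : T2 * T2 = T2) (hh2 : T2.conjTranspose = T2) :
    Differentiable ℂ (fun ρ : ℂ => (W0 T1 T2 ρ).det) ∧
      (∀ ρ : ℂ, (W0 T1 T2 (ρ + 2)).det = (W0 T1 T2 ρ).det) ∧
      (∃ ρ : ℂ, (W0 T1 T2 ρ).det ≠ 0) :=
  det_W0_entire_periodic_not_zero_general T1 T2 hp1 hp2
end

section
/- Let $(\varkappa_n)_{n\ge0} \in \ell^2$ be a real sequence. Then the series $F(x) = \sum_{n=0}^\infty \varkappa_n \cos((n + \varkappa'_n) x)$, where $(\varkappa'_n) \in \ell^2$ is a fixed real sequence with $\sup_n |\varkappa'_n| < 1/4$, converges in $L^2(0,\pi)$ and satisfies $\|F\|_{L^2(0,\pi)} \le C \|(\varkappa_n)\|_{\ell^2}$, with $C$ depending only on $(\varkappa'_n)$. -/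
/-!
Split `cos ((n + ϰ'ₙ) x) = cos (n x) + (cos ((n + ϰ'ₙ) x) - cos (n x))`. The functions `cos (n x)`
are orthogonal in `L²(0, π)` with squared norms at most `π`, so `‖∑ aₙ cos (n x)‖ ≤ √π ‖a‖₂`.
Since `|cos u - cos v| ≤ |u - v|`, Cauchy–Schwarz bounds the perturbation pointwise on `(0, π)` by
`π ‖a‖₂ ‖ϰ'‖₂`. This Bessel bound on finite sums makes the partial sums Cauchy in `L²`, and the
bound passes to the limit.
-/
open MeasureTheory Filter Real

section BesselSum

variable {ι E : Type*} [NormedAddCommGroup E] {v : ι → E} {w : ι → ℝ}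

theorem summable_of_norm_sum_le_sqrt [CompleteSpace E] (hw : Summable w)
    (hv : ∀ t : Finset ι, ‖∑ i ∈ t, v i‖ ≤ √(∑ i ∈ t, w i)) : Summable v := by
  refine summable_iff_vanishing_norm.2 fun ε hε => ?_
  obtain ⟨s, hs⟩ := summable_iff_vanishing.1 hw _ (Iio_mem_nhds (pow_pos hε 2))
  exact ⟨s, fun t ht => (hv t).trans_lt ((sqrt_lt' hε).2 (hs t ht))⟩

theorem norm_tsum_le_sqrt_tsum [CompleteSpace E] (hw : Summable w) (hw₀ : ∀ i, 0 ≤ w i)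
    (hv : ∀ t : Finset ι, ‖∑ i ∈ t, v i‖ ≤ √(∑ i ∈ t, w i)) : ‖∑' i, v i‖ ≤ √(∑' i, w i) :=
  le_of_tendsto' (summable_of_norm_sum_le_sqrt hw hv).hasSum.norm fun t =>
    (hv t).trans (sqrt_le_sqrt (hw.sum_le_tsum t fun i _ => hw₀ i))

end BesselSum

theorem exists_memLp_tendsto_eLpNorm_sum_sub {α E : Type*} [MeasurableSpace α]
    [NormedAddCommGroup E] [CompleteSpace E] {μ : Measure α} {p : ENNReal} [Fact (1 ≤ p)]
    {f : ℕ → α → E} (hf : ∀ n, MemLp (f n) p μ) {w : ℕ → ℝ} (hw : Summable w) (hw₀ : ∀ n, 0 ≤ w n)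
    (hbound : ∀ t : Finset ℕ,
      eLpNorm (fun x => ∑ n ∈ t, f n x) p μ ≤ ENNReal.ofReal √(∑ n ∈ t, w n)) :
    ∃ F : α → E, MemLp F p μ ∧
      Tendsto (fun N => eLpNorm (fun x => ∑ n ∈ Finset.range N, f n x - F x) p μ) atTop
        (nhds 0) ∧
      eLpNorm F p μ ≤ ENNReal.ofReal √(∑' n, w n) := by
  set g : ℕ → Lp E p μ := fun n => (hf n).toLp (f n)
  have hcoe (t : Finset ℕ) : ⇑(∑ n ∈ t, g n) =ᵐ[μ] fun x => ∑ n ∈ t, f n x := by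
    filter_upwards [Lp.coeFn_fun_finsetSum t g, ae_all_iff.2 fun n => (hf n).coeFn_toLp]
      with x hsum hg
    rw [hsum]; exact Finset.sum_congr rfl fun n _ => hg n
  have hg (t : Finset ℕ) : ‖∑ n ∈ t, g n‖ ≤ √(∑ n ∈ t, w n) := by
    rw [← ENNReal.ofReal_le_ofReal_iff (sqrt_nonneg _), ofReal_norm, Lp.enorm_def,
      eLpNorm_congr_ae (hcoe t)]
    exact hbound t
  obtain ⟨S, hS⟩ := summable_of_norm_sum_le_sqrt hw hg
  refine ⟨S, Lp.memLp S, ?_, ?_⟩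
  · have hlim : Tendsto (fun N => ‖∑ n ∈ Finset.range N, g n - S‖ₑ) atTop (nhds 0) := by
      simpa using (hS.tendsto_sum_nat.sub_const S).enorm
    refine hlim.congr fun N => ?_
    rw [Lp.enorm_def]
    refine eLpNorm_congr_ae ?_
    filter_upwards [Lp.coeFn_sub (∑ n ∈ Finset.range N, g n) S, hcoe (Finset.range N)]
      with x hsub hsum
    rw [hsub, Pi.sub_apply, hsum]
  · rw [← Lp.enorm_def, ← ofReal_norm, ← hS.tsum_eq]
    exact ENNReal.ofReal_le_ofReal (norm_tsum_le_sqrt_tsum hw hw₀ hg)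

theorem integral_cos_int_mul_eq_zero {k : ℤ} (hk : k ≠ 0) : ∫ x in (0:ℝ)..π, cos (k * x) = 0 := by
  rw [intervalIntegral.integral_comp_mul_left cos (Int.cast_ne_zero.2 hk), integral_cos]
  simp [sin_int_mul_pi]

theorem integral_cos_nat_mul_mul_cos_nat_mul_eq_zero {m n : ℕ} (h : m ≠ n) :
    ∫ x in (0:ℝ)..π, cos (m * x) * cos (n * x) = 0 := by
  have hprod (x : ℝ) : cos (m * x) * cos (n * x) =
      (cos (((m - n : ℤ) : ℝ) * x) + cos (((m + n : ℤ) : ℝ) * x)) / 2 := by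
    push_cast
    rw [sub_mul, add_mul, cos_sub, cos_add]
    ring
  simp_rw [hprod]
  rw [intervalIntegral.integral_div,
    intervalIntegral.integral_add (Continuous.intervalIntegrable (by fun_prop) _ _)
      (Continuous.intervalIntegrable (by fun_prop) _ _),
    integral_cos_int_mul_eq_zero (by omega), integral_cos_int_mul_eq_zero (by omega)]
  simp

theorem integral_sq_sum_mul_cos_nat_mul_le (t : Finset ℕ) (a : ℕ → ℝ) :
    ∫ x in (0:ℝ)..π, (∑ n ∈ t, a n * cos (n * x)) ^ 2 ≤ π * ∑ n ∈ t, a n ^ 2 := by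
  have hexpand (x : ℝ) : (∑ n ∈ t, a n * cos (n * x)) ^ 2 =
      ∑ m ∈ t, ∑ n ∈ t, a m * a n * (cos (m * x) * cos (n * x)) := by
    rw [sq, Finset.sum_mul_sum]
    exact Finset.sum_congr rfl fun m _ => Finset.sum_congr rfl fun n _ => by ring
  have hdiag (m : ℕ) : ∫ x in (0:ℝ)..π, cos (m * x) * cos (m * x) ≤ π := by
    have := intervalIntegral.norm_integral_le_of_norm_le_const (a := 0) (b := π) (C := 1)
      (f := fun x => cos (m * x) * cos (m * x)) fun x _ => by
        rw [norm_mul]; exact mul_le_one₀ (abs_cos_le_one _) (norm_nonneg _) (abs_cos_le_one _)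
    simpa [abs_of_nonneg pi_nonneg] using (le_abs_self _).trans this
  simp_rw [hexpand]
  calc ∫ x in (0:ℝ)..π, ∑ m ∈ t, ∑ n ∈ t, a m * a n * (cos (m * x) * cos (n * x))
      = ∑ m ∈ t, ∑ n ∈ t, a m * a n * ∫ x in (0:ℝ)..π, cos (m * x) * cos (n * x) := by
        rw [intervalIntegral.integral_finsetSum fun m _ =>
          Continuous.intervalIntegrable (by fun_prop) _ _]
        refine Finset.sum_congr rfl fun m _ => ?_
        rw [intervalIntegral.integral_finsetSum fun n _ =>
          Continuous.intervalIntegrable (by fun_prop) _ _]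
        simp only [intervalIntegral.integral_const_mul]
    _ = ∑ m ∈ t, a m ^ 2 * ∫ x in (0:ℝ)..π, cos (m * x) * cos (m * x) := by
        refine Finset.sum_congr rfl fun m hm => ?_
        rw [Finset.sum_eq_single_of_mem m hm fun n _ hnm => by
          rw [integral_cos_nat_mul_mul_cos_nat_mul_eq_zero hnm.symm, mul_zero], sq]
    _ ≤ π * ∑ n ∈ t, a n ^ 2 := by
        rw [Finset.mul_sum]
        exact Finset.sum_le_sum fun m _ => by rw [mul_comm π]; gcongr; exact hdiag m

theorem memLp_const_mul_cos_mul {p : ENNReal} {a b : ℝ} (c r : ℝ) :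
    MemLp (fun x => c * cos (r * x)) p (volume.restrict (Set.Ioo a b)) :=
  MemLp.of_bound (by fun_prop : Continuous _).aestronglyMeasurable |c| <| ae_of_all _ fun x => by
    rw [norm_mul, norm_eq_abs]
    exact mul_le_of_le_one_right (abs_nonneg c) (abs_cos_le_one _)

theorem eLpNorm_two_restrict_Ioo_eq {a b : ℝ} (hab : a ≤ b) {g : ℝ → ℝ}
    (hg : MemLp g 2 (volume.restrict (Set.Ioo a b))) :
    eLpNorm g 2 (volume.restrict (Set.Ioo a b)) = ENNReal.ofReal √(∫ x in a..b, g x ^ 2) := by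
  rw [hg.eLpNorm_eq_integral_rpow_norm two_ne_zero ENNReal.ofNat_ne_top,
    intervalIntegral.integral_of_le hab, integral_Ioc_eq_integral_Ioo, sqrt_eq_rpow]
  norm_num

theorem abs_sum_mul_cos_add_mul_sub_le (t : Finset ℕ) (a δ : ℕ → ℝ) (x : ℝ) :
    |∑ n ∈ t, a n * (cos ((n + δ n) * x) - cos (n * x))| ≤
      |x| * (√(∑ n ∈ t, a n ^ 2) * √(∑ n ∈ t, δ n ^ 2)) := by
  calc |∑ n ∈ t, a n * (cos ((n + δ n) * x) - cos (n * x))|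
      ≤ ∑ n ∈ t, |a n| * |δ n * x| := by
        refine (Finset.abs_sum_le_sum_abs _ _).trans (Finset.sum_le_sum fun n _ => ?_)
        rw [abs_mul, show δ n * x = (n + δ n) * x - n * x by ring]
        exact mul_le_mul_of_nonneg_left (abs_cos_sub_cos_le _ _) (abs_nonneg _)
    _ = |x| * ∑ n ∈ t, |a n| * |δ n| := by
        rw [Finset.mul_sum]
        exact Finset.sum_congr rfl fun n _ => by rw [abs_mul]; ring
    _ ≤ |x| * (√(∑ n ∈ t, a n ^ 2) * √(∑ n ∈ t, δ n ^ 2)) := by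
        simpa only [sq_abs] using
          mul_le_mul_of_nonneg_left (sum_mul_le_sqrt_mul_sqrt t (|a ·|) (|δ ·|)) (abs_nonneg x)

theorem eLpNorm_sum_mul_cos_add_mul_sub_le (t : Finset ℕ) (a δ : ℕ → ℝ) :
    eLpNorm (fun x => ∑ n ∈ t, a n * (cos ((n + δ n) * x) - cos (n * x))) 2
        (volume.restrict (Set.Ioo 0 π)) ≤
      ENNReal.ofReal (√π * (π * (√(∑ n ∈ t, a n ^ 2) * √(∑ n ∈ t, δ n ^ 2)))) := by
  have hbound : ∀ᵐ x ∂volume.restrict (Set.Ioo 0 π),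
      ‖∑ n ∈ t, a n * (cos ((n + δ n) * x) - cos (n * x))‖ ≤
        π * (√(∑ n ∈ t, a n ^ 2) * √(∑ n ∈ t, δ n ^ 2)) := by
    filter_upwards [ae_restrict_mem measurableSet_Ioo] with x hx
    refine (abs_sum_mul_cos_add_mul_sub_le t a δ x).trans ?_
    gcongr
    exact abs_le.2 ⟨by linarith [hx.1, pi_pos], hx.2.le⟩
  have hvol : volume.restrict (Set.Ioo 0 π) Set.univ ^ (2 : ENNReal).toReal⁻¹ =
      ENNReal.ofReal √π := by
    rw [Measure.restrict_apply_univ, volume_Ioo, sub_zero, sqrt_eq_rpow,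
      ENNReal.ofReal_rpow_of_nonneg pi_nonneg (by norm_num)]
    norm_num
  rw [ENNReal.ofReal_mul (sqrt_nonneg _), ← hvol]
  exact eLpNorm_le_of_ae_bound hbound

theorem eLpNorm_sum_mul_cos_nat_mul_le (t : Finset ℕ) (a : ℕ → ℝ) :
    eLpNorm (fun x => ∑ n ∈ t, a n * cos (n * x)) 2 (volume.restrict (Set.Ioo 0 π)) ≤
      ENNReal.ofReal (√π * √(∑ n ∈ t, a n ^ 2)) := by
  rw [eLpNorm_two_restrict_Ioo_eq pi_nonneg
    (memLp_finsetSum t fun n _ => memLp_const_mul_cos_mul _ _), ← sqrt_mul pi_nonneg]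
  gcongr
  exact integral_sq_sum_mul_cos_nat_mul_le t a

theorem eLpNorm_sum_mul_cos_add_mul_le {δ : ℕ → ℝ} (hδ : Summable fun n => δ n ^ 2)
    (t : Finset ℕ) (a : ℕ → ℝ) :
    eLpNorm (fun x => ∑ n ∈ t, a n * cos ((n + δ n) * x)) 2 (volume.restrict (Set.Ioo 0 π)) ≤
      ENNReal.ofReal (√π * (1 + π * √(∑' n, δ n ^ 2)) * √(∑ n ∈ t, a n ^ 2)) := by
  have hsplit : (fun x => ∑ n ∈ t, a n * cos ((n + δ n) * x)) =
      (fun x => ∑ n ∈ t, a n * cos (n * x)) +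
        fun x => ∑ n ∈ t, a n * (cos ((n + δ n) * x) - cos (n * x)) := by
    ext x
    simp only [Pi.add_apply, ← Finset.sum_add_distrib, mul_sub, add_sub_cancel]
  have hδt : √(∑ n ∈ t, δ n ^ 2) ≤ √(∑' n, δ n ^ 2) :=
    sqrt_le_sqrt (hδ.sum_le_tsum t fun n _ => sq_nonneg _)
  rw [hsplit]
  calc _ ≤ eLpNorm (fun x => ∑ n ∈ t, a n * cos (n * x)) 2 (volume.restrict (Set.Ioo 0 π)) +
        eLpNorm (fun x => ∑ n ∈ t, a n * (cos ((n + δ n) * x) - cos (n * x))) 2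
          (volume.restrict (Set.Ioo 0 π)) :=
        eLpNorm_add_le (by fun_prop) (by fun_prop) one_le_two
    _ ≤ ENNReal.ofReal (√π * √(∑ n ∈ t, a n ^ 2)) +
        ENNReal.ofReal (√π * (π * (√(∑ n ∈ t, a n ^ 2) * √(∑ n ∈ t, δ n ^ 2)))) :=
        add_le_add (eLpNorm_sum_mul_cos_nat_mul_le t a) (eLpNorm_sum_mul_cos_add_mul_sub_le t a δ)
    _ ≤ ENNReal.ofReal (√π * (1 + π * √(∑' n, δ n ^ 2)) * √(∑ n ∈ t, a n ^ 2)) := by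
        rw [← ENNReal.ofReal_add (by positivity) (by positivity)]
        gcongr
        nlinarith [mul_le_mul_of_nonneg_left hδt
          (by positivity : 0 ≤ √π * π * √(∑ n ∈ t, a n ^ 2))]

theorem cosine_series_L2_bound_general (ϰ' : ℕ → ℝ) (hϰ'2 : Summable (fun n => ϰ' n ^ 2)) :
    ∃ C : ℝ, 0 < C ∧
      ∀ ϰ : ℕ → ℝ, Summable (fun n => ϰ n ^ 2) →
        ∃ F : ℝ → ℝ,
          MemLp F 2 (volume.restrict (Set.Ioo 0 π)) ∧
          Tendsto (fun N => eLpNorm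
              (fun x => (∑ n ∈ Finset.range N, ϰ n * Real.cos ((n + ϰ' n) * x)) - F x)
              2 (volume.restrict (Set.Ioo 0 π))) atTop (nhds 0) ∧
          eLpNorm F 2 (volume.restrict (Set.Ioo 0 π)) ≤
            ENNReal.ofReal (C * Real.sqrt (∑' n, ϰ n ^ 2)) := by
  set C := √π * (1 + π * √(∑' n, ϰ' n ^ 2))
  have hC : 0 < C := by positivity
  have hsqrt (s : ℝ) : √(C ^ 2 * s) = C * √s := by rw [sqrt_mul (sq_nonneg C), sqrt_sq hC.le]
  refine ⟨C, hC, fun ϰ hϰ => ?_⟩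
  obtain ⟨F, hF, hlim, hle⟩ :=
    exists_memLp_tendsto_eLpNorm_sum_sub (μ := volume.restrict (Set.Ioo 0 π)) (p := 2)
      (f := fun n x => ϰ n * cos ((n + ϰ' n) * x)) (w := fun n => C ^ 2 * ϰ n ^ 2)
      (fun n => memLp_const_mul_cos_mul _ _) (hϰ.mul_left _) (fun n => by positivity)
      fun t => by
        simpa only [← Finset.mul_sum, hsqrt] using eLpNorm_sum_mul_cos_add_mul_le hϰ'2 t ϰ
  refine ⟨F, hF, hlim, ?_⟩
  rwa [tsum_mul_left, hsqrt] at hle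

/-- Bessel-type synthesis inequality for the perturbed cosine system: if `(ϰ'_n) ∈ ℓ²`
with `sup_n |ϰ'_n| < 1/4`, then for every `(ϰ_n) ∈ ℓ²` the series
`F(x) = ∑ ϰ_n cos((n + ϰ'_n) x)` converges in `L²(0,π)` and
`‖F‖_{L²} ≤ C ‖(ϰ_n)‖_{ℓ²}` with `C` depending only on `(ϰ'_n)`. -/
theorem cosine_series_L2_bound (ϰ' : ℕ → ℝ) (hϰ'2 : Summable (fun n => ϰ' n ^ 2))
    (hsmall : ∃ c : ℝ, c < 1 / 4 ∧ ∀ n, |ϰ' n| ≤ c) :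
    ∃ C : ℝ, 0 < C ∧
      ∀ ϰ : ℕ → ℝ, Summable (fun n => ϰ n ^ 2) →
        ∃ F : ℝ → ℝ,
          MemLp F 2 (volume.restrict (Set.Ioo 0 π)) ∧
          Tendsto (fun N => eLpNorm
              (fun x => (∑ n ∈ Finset.range N, ϰ n * Real.cos ((n + ϰ' n) * x)) - F x)
              2 (volume.restrict (Set.Ioo 0 π))) atTop (nhds 0) ∧
          eLpNorm F 2 (volume.restrict (Set.Ioo 0 π)) ≤
            ENNReal.ofReal (C * Real.sqrt (∑' n, ϰ n ^ 2)) :=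
  cosine_series_L2_bound_general ϰ' hϰ'2
end

section
/- Let $(\rho_n)_{n\ge0}$ be real numbers with $\rho_n = n + \varkappa'_n$, $(\varkappa'_n) \in \ell^2$, $\sup_n|\varkappa'_n| < 1/4$. Then for every $F \in L^2(0,\pi)$, the sequence $\varkappa_n = \int_0^\pi F(x)\cos(\rho_n x)\,dx$ belongs to $\ell^2$ and $\|(\varkappa_n)\|_{\ell^2} \le C\|F\|_{L^2(0,\pi)}$, with $C$ depending only on $(\rho_n)$. -/
/-!
Split `cos (ρ_n x) = cos (n x) + (cos (ρ_n x) - cos (n x))`. The functions `cos (n x)` are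
orthogonal in `L²(0, π)` with norms at most `√π`, so Bessel's inequality bounds their
coefficients. Since `cos` is `1`-Lipschitz, the differences have `L²` norm at most
`π^{3/2} |ϰ'_n|`, a square-summable sequence, so Cauchy–Schwarz bounds their coefficients.
-/

open MeasureTheory Set Real

def IsBesselSeq {ι E : Type*} [NormedAddCommGroup E] [InnerProductSpace ℝ E]
    (v : ι → E) (B : ℝ) : Prop :=
  ∀ x : E, Summable (fun i => inner ℝ (v i) x ^ 2) ∧ ∑' i, inner ℝ (v i) x ^ 2 ≤ B * ‖x‖ ^ 2

namespace IsBesselSeq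

variable {ι E : Type*} [NormedAddCommGroup E] [InnerProductSpace ℝ E]

theorem of_orthogonal {v : ι → E} (horth : Pairwise fun i j => inner ℝ (v i) (v j) = 0)
    (hne : ∀ i, v i ≠ 0) {M : ℝ} (hM : ∀ i, ‖v i‖ ≤ M) : IsBesselSeq v (M ^ 2) := by
  set u : ι → E := fun i => ‖v i‖⁻¹ • v i
  have hu : Orthonormal ℝ u :=
    ⟨fun i => norm_smul_inv_norm (hne i), fun i j hij => by
      simp [u, real_inner_smul_left, real_inner_smul_right, horth hij]⟩
  have hvu : ∀ i x, inner ℝ (v i) x ^ 2 ≤ M ^ 2 * inner ℝ (u i) x ^ 2 := by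
    intro i x
    have : inner ℝ (v i) x = ‖v i‖ * inner ℝ (u i) x := by
      simp [u, real_inner_smul_left, hne]
    rw [this, mul_pow]
    gcongr
    exact hM i
  intro x
  have hu_sum : Summable fun i => inner ℝ (u i) x ^ 2 := by
    simpa using hu.inner_products_summable x
  have hsum := hu_sum.mul_left (M ^ 2)
  have hsum' := hsum.of_nonneg_of_le (fun i => sq_nonneg _) (hvu · x)
  refine ⟨hsum', ?_⟩
  calc ∑' i, inner ℝ (v i) x ^ 2 ≤ ∑' i, M ^ 2 * inner ℝ (u i) x ^ 2 :=
        Summable.tsum_le_tsum (hvu · x) hsum' hsum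
    _ = M ^ 2 * ∑' i, inner ℝ (u i) x ^ 2 := tsum_mul_left
    _ ≤ M ^ 2 * ‖x‖ ^ 2 := by
        gcongr
        simpa using hu.tsum_inner_products_le x

theorem of_summable_norm_sq {u : ι → E} (hu : Summable fun i => ‖u i‖ ^ 2) :
    IsBesselSeq u (∑' i, ‖u i‖ ^ 2) := by
  intro x
  have hle : ∀ i, inner ℝ (u i) x ^ 2 ≤ ‖u i‖ ^ 2 * ‖x‖ ^ 2 := fun i => by
    rw [← mul_pow, ← sq_abs]
    exact pow_le_pow_left₀ (abs_nonneg _) (abs_real_inner_le_norm _ _) 2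
  have hsum := hu.mul_right (‖x‖ ^ 2)
  have hsum' := hsum.of_nonneg_of_le (fun i => sq_nonneg _) hle
  refine ⟨hsum', ?_⟩
  calc ∑' i, inner ℝ (u i) x ^ 2 ≤ ∑' i, ‖u i‖ ^ 2 * ‖x‖ ^ 2 := Summable.tsum_le_tsum hle hsum' hsum
    _ = (∑' i, ‖u i‖ ^ 2) * ‖x‖ ^ 2 := tsum_mul_right

theorem add {u v : ι → E} {A B : ℝ} (hu : IsBesselSeq u A) (hv : IsBesselSeq v B) :
    IsBesselSeq (u + v) (2 * A + 2 * B) := by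
  intro x
  obtain ⟨hsu, htu⟩ := hu x
  obtain ⟨hsv, htv⟩ := hv x
  have hle : ∀ i, inner ℝ ((u + v) i) x ^ 2 ≤
      2 * inner ℝ (u i) x ^ 2 + 2 * inner ℝ (v i) x ^ 2 := fun i => by
    rw [Pi.add_apply, inner_add_left]
    nlinarith [sq_nonneg (inner ℝ (u i) x - inner ℝ (v i) x)]
  have hsum := (hsu.mul_left 2).add (hsv.mul_left 2)
  have hsum' := hsum.of_nonneg_of_le (fun i => sq_nonneg _) hle
  refine ⟨hsum', ?_⟩
  calc ∑' i, inner ℝ ((u + v) i) x ^ 2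
      ≤ ∑' i, (2 * inner ℝ (u i) x ^ 2 + 2 * inner ℝ (v i) x ^ 2) :=
        Summable.tsum_le_tsum hle hsum' hsum
    _ = 2 * ∑' i, inner ℝ (u i) x ^ 2 + 2 * ∑' i, inner ℝ (v i) x ^ 2 := by
        rw [(hsu.mul_left 2).tsum_add (hsv.mul_left 2), tsum_mul_left, tsum_mul_left]
    _ ≤ 2 * (A * ‖x‖ ^ 2) + 2 * (B * ‖x‖ ^ 2) := by gcongr
    _ = (2 * A + 2 * B) * ‖x‖ ^ 2 := by ring

theorem sqrt_tsum_le {v : ι → E} {B : ℝ} (hv : IsBesselSeq v B) (x : E) :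
    √(∑' i, inner ℝ (v i) x ^ 2) ≤ √B * ‖x‖ :=
  calc √(∑' i, inner ℝ (v i) x ^ 2) ≤ √(B * ‖x‖ ^ 2) := Real.sqrt_le_sqrt (hv x).2
    _ = √B * ‖x‖ := by rw [Real.sqrt_mul' _ (sq_nonneg _), Real.sqrt_sq (norm_nonneg _)]

end IsBesselSeq

theorem integral_cos_int_mul (k : ℤ) :
    ∫ x in (0 : ℝ)..π, cos (k * x) = if k = 0 then π else 0 := by
  split_ifs with hk
  · simp [hk]
  · rw [intervalIntegral.integral_comp_mul_left cos (Int.cast_ne_zero.2 hk)]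
    simp [integral_cos, sin_int_mul_pi]

theorem integral_cos_nat_mul_mul_cos_nat_mul (m n : ℕ) :
    ∫ x in (0 : ℝ)..π, cos (m * x) * cos (n * x) =
      ((if m = n then π else 0) + if m + n = 0 then π else 0) / 2 := by
  have hprod : ∀ x : ℝ, cos (m * x) * cos (n * x) =
      (cos (((m - n : ℤ) : ℝ) * x) + cos (((m + n : ℤ) : ℝ) * x)) / 2 := fun x => by
    push_cast
    rw [sub_mul, add_mul, cos_sub, cos_add]
    ring
  have hint : ∀ k : ℤ, IntervalIntegrable (fun x => cos (k * x)) volume 0 π := fun k =>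
    (by fun_prop : Continuous fun x : ℝ => cos (k * x)).intervalIntegrable _ _
  simp_rw [hprod]
  rw [intervalIntegral.integral_div, intervalIntegral.integral_add (hint _) (hint _),
    integral_cos_int_mul, integral_cos_int_mul]
  congr 2 <;> split_ifs <;> first | rfl | (exfalso; omega)

theorem MeasureTheory.MemLp.inner_toLp_toLp {α : Type*} [MeasurableSpace α] {μ : Measure α}
    {f g : α → ℝ} (hf : MemLp f 2 μ) (hg : MemLp g 2 μ) :
    inner ℝ (hf.toLp f) (hg.toLp g) = ∫ a, f a * g a ∂μ := by
  rw [L2.inner_def]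
  refine integral_congr_ae ?_
  filter_upwards [hf.coeFn_toLp, hg.coeFn_toLp] with a hfa hga
  rw [hfa, hga, Real.inner_apply]

theorem memLp_cos_mul {μ : Measure ℝ} [IsFiniteMeasure μ] (p : ENNReal) (r : ℝ) :
    MemLp (fun t => cos (r * t)) p μ :=
  .of_bound (by fun_prop : Continuous fun t => cos (r * t)).aestronglyMeasurable 1
    (ae_of_all _ fun t => by simpa using abs_cos_le_one _)

noncomputable def cosLp (r : ℝ) : Lp ℝ 2 (volume.restrict (Ioo 0 π)) :=
  (memLp_cos_mul 2 r).toLp _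

theorem norm_toLp_le_sqrt_pi_mul {f : ℝ → ℝ} (hf : MemLp f 2 (volume.restrict (Ioo 0 π)))
    {B : ℝ} (hB : 0 ≤ B) (hfB : ∀ t ∈ Ioo 0 π, |f t| ≤ B) : ‖hf.toLp f‖ ≤ √π * B := by
  have hμ : (measureUnivNNReal (volume.restrict (Ioo 0 π)) : ℝ) = π := by
    simp [measureUnivNNReal, ENNReal.coe_toNNReal_eq_toReal, pi_pos.le]
  refine (Lp.norm_le_of_ae_bound hB ?_).trans_eq ?_
  · filter_upwards [hf.coeFn_toLp, ae_restrict_mem measurableSet_Ioo] with t hft ht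
    rw [hft]
    exact hfB t ht
  · rw [hμ, sqrt_eq_rpow]
    norm_num

theorem norm_cosLp_le (r : ℝ) : ‖cosLp r‖ ≤ √π :=
  (norm_toLp_le_sqrt_pi_mul (memLp_cos_mul 2 r) zero_le_one fun t _ =>
    abs_cos_le_one (r * t)).trans_eq (mul_one _)

theorem norm_cosLp_sub_cosLp_le (r s : ℝ) : ‖cosLp r - cosLp s‖ ≤ √π * (π * |r - s|) := by
  rw [cosLp, cosLp, ← MemLp.toLp_sub]
  refine norm_toLp_le_sqrt_pi_mul _ (by positivity) fun t ht => ?_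
  calc |cos (r * t) - cos (s * t)| ≤ |r * t - s * t| := abs_cos_sub_cos_le _ _
    _ = |r - s| * t := by rw [← sub_mul, abs_mul, abs_of_pos ht.1]
    _ ≤ |r - s| * π := by gcongr; exact ht.2.le
    _ = π * |r - s| := mul_comm _ _

theorem inner_cosLp_nat_cosLp_nat (m n : ℕ) :
    inner ℝ (cosLp m) (cosLp n) = ((if m = n then π else 0) + if m + n = 0 then π else 0) / 2 := by
  rw [cosLp, cosLp, MemLp.inner_toLp_toLp, ← integral_Ioc_eq_integral_Ioo,
    ← intervalIntegral.integral_of_le pi_pos.le, integral_cos_nat_mul_mul_cos_nat_mul]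

theorem inner_cosLp_toLp {F : ℝ → ℝ} (hF : MemLp F 2 (volume.restrict (Ioo 0 π))) (r : ℝ) :
    inner ℝ (cosLp r) (hF.toLp F) = ∫ t in Ioo 0 π, F t * cos (r * t) := by
  simp_rw [cosLp, MemLp.inner_toLp_toLp, mul_comm]

theorem isBesselSeq_cosLp_nat : IsBesselSeq (fun n : ℕ => cosLp n) π := by
  have horth : Pairwise fun m n : ℕ => inner ℝ (cosLp m) (cosLp n) = 0 := fun m n h => by
    show inner ℝ (cosLp m) (cosLp n) = 0
    rw [inner_cosLp_nat_cosLp_nat, if_neg h, if_neg (by omega)]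
    simp
  have hne : ∀ n : ℕ, cosLp n ≠ 0 := fun n => by
    rw [← inner_self_ne_zero (𝕜 := ℝ), inner_cosLp_nat_cosLp_nat, if_pos rfl]
    split_ifs <;> positivity
  simpa [pi_pos.le] using IsBesselSeq.of_orthogonal horth hne fun n => norm_cosLp_le n

theorem cosine_coefficients_l2_bound_general (ϰ' : ℕ → ℝ) (hϰ'2 : Summable (fun n => ϰ' n ^ 2)) :
    ∃ C : ℝ, 0 < C ∧
      ∀ F : ℝ → ℝ, MemLp F 2 (volume.restrict (Set.Ioo 0 π)) →
        Summable (fun n : ℕ => (∫ x in Set.Ioo 0 π, F x * Real.cos ((n + ϰ' n) * x)) ^ 2) ∧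
        Real.sqrt (∑' n : ℕ, (∫ x in Set.Ioo 0 π, F x * Real.cos ((n + ϰ' n) * x)) ^ 2) ≤
          C * (eLpNorm F 2 (volume.restrict (Set.Ioo 0 π))).toReal := by
  set u : ℕ → Lp ℝ 2 (volume.restrict (Ioo 0 π)) := fun n => cosLp (n + ϰ' n) - cosLp n
  have hu_le : ∀ n, ‖u n‖ ^ 2 ≤ π ^ 3 * ϰ' n ^ 2 := fun n => by
    calc ‖u n‖ ^ 2 ≤ (√π * (π * |ϰ' n|)) ^ 2 := by
          gcongr
          simpa using norm_cosLp_sub_cosLp_le (n + ϰ' n) n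
      _ = π ^ 3 * ϰ' n ^ 2 := by
          rw [mul_pow, mul_pow, sq_sqrt pi_pos.le, sq_abs]
          ring
  have hu : Summable fun n => ‖u n‖ ^ 2 :=
    (hϰ'2.mul_left _).of_nonneg_of_le (fun _ => sq_nonneg _) hu_le
  set B := 2 * π + 2 * ∑' n, ‖u n‖ ^ 2
  have hB : IsBesselSeq (fun n : ℕ => cosLp (n + ϰ' n)) B := by
    have hsplit : (fun n : ℕ => cosLp n) + u = fun n => cosLp (n + ϰ' n) :=
      funext fun n => add_sub_cancel _ _
    simpa only [hsplit] using isBesselSeq_cosLp_nat.add (IsBesselSeq.of_summable_norm_sq hu)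
  have hB_pos : 0 < B := by
    have : 0 ≤ ∑' n, ‖u n‖ ^ 2 := tsum_nonneg fun n => sq_nonneg _
    positivity
  refine ⟨√B, sqrt_pos.2 hB_pos, fun F hF => ?_⟩
  simp_rw [← inner_cosLp_toLp hF, ← Lp.norm_toLp F hF]
  exact ⟨(hB _).1, hB.sqrt_tsum_le _⟩

/-- Bessel property of the perturbed cosine system: if `ρ_n = n + ϰ'_n` with
`(ϰ'_n) ∈ ℓ²` and `sup_n |ϰ'_n| < 1/4`, then for every `F ∈ L²(0,π)` the sequence
`ϰ_n = ∫₀^π F(x) cos(ρ_n x) dx` is in `ℓ²` with `‖(ϰ_n)‖_{ℓ²} ≤ C ‖F‖_{L²}`,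
`C` depending only on `(ρ_n)`. -/
theorem cosine_coefficients_l2_bound (ϰ' : ℕ → ℝ) (hϰ'2 : Summable (fun n => ϰ' n ^ 2))
    (hsmall : ∃ c : ℝ, c < 1 / 4 ∧ ∀ n, |ϰ' n| ≤ c) :
    ∃ C : ℝ, 0 < C ∧
      ∀ F : ℝ → ℝ, MemLp F 2 (volume.restrict (Set.Ioo 0 π)) →
        Summable (fun n : ℕ => (∫ x in Set.Ioo 0 π, F x * Real.cos ((n + ϰ' n) * x)) ^ 2) ∧
        Real.sqrt (∑' n : ℕ, (∫ x in Set.Ioo 0 π, F x * Real.cos ((n + ϰ' n) * x)) ^ 2) ≤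
          C * (eLpNorm F 2 (volume.restrict (Set.Ioo 0 π))).toReal :=
  cosine_coefficients_l2_bound_general ϰ' hϰ'2
end
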